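/- arXiv:math/0606223 — 4 statements merged into one kernel-verified Lean document; each statement's English description precedes it below -/
import Mathlib

section
/- For every integer n ≥ 1 and every real t > 0, the series Σ_{k=0}^∞ h_n(k) e^{-(n/2+k)t} converges absolutely and cosh(t/2)/(sinh(t/2))^{n+1} = 2^n · Σ_{k=0}^∞ h_n(k) e^{-(n/2+k)t}. -/
/-!
Put `x = e^{-t}`. Splitting `2k + n = (k + n) + k` gives `h_n(k) = C(k+n, n) + C(k+n-1, n)`, so the
negative binomial series yields `∑ h_n(k) x^k = (1 + x) / (1 - x)^{n+1}`. On the other side,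
`sinh (t/2) = e^{t/2}(1 - x)/2` and `cosh (t/2) = e^{t/2}(1 + x)/2`, so
`cosh (t/2) / sinh (t/2)^{n+1} = 2^n e^{-nt/2} (1 + x) / (1 - x)^{n+1}`.
-/

open scoped BigOperators

/-- `h_n(k) = (2k+n)·(k+1)(k+2)⋯(k+n-1)/n!`, the dimension of the space of
spherical harmonics of degree `k` on `S^{n+1}` (for `n ≥ 1`). -/
noncomputable def hCoef (n k : ℕ) : ℝ :=
  (((2 * k + n) * ∏ j ∈ Finset.Icc 1 (n - 1), (k + j) : ℕ) : ℝ) / (n.factorial : ℝ)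

open Finset Real Nat

theorem Nat.prod_Icc_add_eq_ascFactorial (k m : ℕ) :
    ∏ j ∈ Icc 1 m, (k + j) = (k + 1).ascFactorial m := by
  rw [Nat.ascFactorial_eq_prod_range, ← Ico_add_one_right_eq_Icc, prod_Ico_eq_prod_range]
  exact prod_congr rfl fun j _ => by ring

theorem Nat.mul_prod_Icc_add_eq_factorial_mul_choose_add_choose (k m : ℕ) :
    (2 * k + (m + 1)) * ∏ j ∈ Icc 1 m, (k + j) =
      (m + 1)! * ((k + (m + 1)).choose (m + 1) + (k + m).choose (m + 1)) := by
  have upper : (k + (m + 1)) * (k + 1).ascFactorial m = (k + 1).ascFactorial (m + 1) := by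
    rw [Nat.ascFactorial_succ]; ring
  have lower : k * (k + 1).ascFactorial m = k.ascFactorial (m + 1) := by
    rw [Nat.succ_ascFactorial, Nat.ascFactorial_succ]
  rw [Nat.prod_Icc_add_eq_ascFactorial, mul_add, ← Nat.ascFactorial_eq_factorial_mul_choose,
    show k + m = k + (m + 1) - 1 by omega, ← Nat.ascFactorial_eq_factorial_mul_choose', ← upper,
    ← lower]
  ring

theorem hCoef_eq_choose_add_choose {n : ℕ} (hn : 1 ≤ n) (k : ℕ) :
    hCoef n k = (k + n).choose n + (k + n - 1).choose n := by
  obtain ⟨m, rfl⟩ : ∃ m, n = m + 1 := ⟨n - 1, by omega⟩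
  rw [hCoef, Nat.add_sub_cancel, Nat.mul_prod_Icc_add_eq_factorial_mul_choose_add_choose,
    show k + (m + 1) - 1 = k + m by omega]
  push_cast
  field_simp

theorem hasSum_choose_sub_one_mul_geometric_of_norm_lt_one {𝕜 : Type*} [NormedDivisionRing 𝕜]
    {n : ℕ} (hn : 1 ≤ n) {r : 𝕜} (hr : ‖r‖ < 1) :
    HasSum (fun k ↦ ((k + n - 1).choose n : 𝕜) * r ^ k) (1 / (1 - r) ^ (n + 1) * r) := by
  rw [← hasSum_nat_add_iff' 1]
  simpa [Nat.choose_eq_zero_of_lt (show n - 1 < n by omega), show ∀ k, k + 1 + n - 1 = k + n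
    from fun k => by omega, pow_succ, mul_assoc] using
    (hasSum_choose_mul_geometric_of_norm_lt_one n hr).mul_right r

theorem hasSum_hCoef_mul_geometric {n : ℕ} (hn : 1 ≤ n) {x : ℝ} (hx : ‖x‖ < 1) :
    HasSum (fun k ↦ hCoef n k * x ^ k) ((1 + x) / (1 - x) ^ (n + 1)) := by
  rw [show (1 + x) / (1 - x) ^ (n + 1) = 1 / (1 - x) ^ (n + 1) + 1 / (1 - x) ^ (n + 1) * x by ring]
  refine ((hasSum_choose_mul_geometric_of_norm_lt_one n hx).add
    (hasSum_choose_sub_one_mul_geometric_of_norm_lt_one hn hx)).congr_fun fun k => ?_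
  rw [hCoef_eq_choose_add_choose hn, add_mul]

theorem cosh_half_div_sinh_half_pow (n : ℕ) (t : ℝ) :
    cosh (t / 2) / sinh (t / 2) ^ (n + 1) =
      2 ^ n * (exp (-(t / 2)) ^ n * ((1 + exp (-t)) / (1 - exp (-t)) ^ (n + 1))) := by
  set a := exp (-(t / 2))
  have ha : a ≠ 0 := (exp_pos _).ne'
  have hexp : exp (-t) = a ^ 2 := by rw [← exp_nat_mul]; ring_nf
  have hexp' : exp (t / 2) = a⁻¹ := by rw [← exp_neg, neg_neg]
  have hsinh : sinh (t / 2) = (1 - a ^ 2) / (2 * a) := by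
    rw [sinh_eq, hexp']; field_simp; ring
  have hcosh : cosh (t / 2) = (1 + a ^ 2) / (2 * a) := by
    rw [cosh_eq, hexp']; field_simp; ring
  rw [hsinh, hcosh, hexp, div_pow, div_div_eq_mul_div]
  simp only [mul_div_assoc']
  congr 1
  field_simp
  ring

/-- For every integer `n ≥ 1` and every real `t > 0`, the series
`Σ_{k=0}^∞ h_n(k) e^{-(n/2+k)t}` converges absolutely and
`cosh(t/2)/(sinh(t/2))^{n+1} = 2^n · Σ_{k=0}^∞ h_n(k) e^{-(n/2+k)t}`. -/
theorem wave_kernel_series (n : ℕ) (hn : 1 ≤ n) (t : ℝ) (ht : 0 < t) :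
    Summable (fun k : ℕ => |hCoef n k * Real.exp (-((n : ℝ) / 2 + k) * t)|) ∧
    Real.cosh (t / 2) / (Real.sinh (t / 2)) ^ (n + 1) =
      2 ^ n * ∑' k : ℕ, hCoef n k * Real.exp (-((n : ℝ) / 2 + k) * t) := by
  have hx : ‖exp (-t)‖ < 1 := by
    rw [norm_of_nonneg (exp_pos _).le, exp_lt_one_iff]
    linarith
  have hterm (k : ℕ) : hCoef n k * exp (-((n : ℝ) / 2 + k) * t) =
      exp (-(t / 2)) ^ n * (hCoef n k * exp (-t) ^ k) := by
    rw [← exp_nat_mul, ← exp_nat_mul, mul_left_comm, ← exp_add]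
    ring_nf
  have hsum := ((hasSum_hCoef_mul_geometric hn hx).mul_left (exp (-(t / 2)) ^ n)).congr_fun hterm
  exact ⟨summable_abs_iff.2 hsum.summable, by rw [cosh_half_div_sinh_half_pow, hsum.tsum_eq]⟩
end

section
/- Let n ∈ ℕ and let ζ ∈ ℂ with Im ζ > 0. Then for every real z the function t ↦ t^{n+1} e^{iζ|t|} e^{izt} is integrable on ℝ, the complex numbers z-ζ and z+ζ are nonzero, and ∫_ℝ t^{n+1} e^{iζ|t|} e^{izt} dt = (n+1)! · i^n · ( (z-ζ)^{-(n+2)} - (z+ζ)^{-(n+2)} ). -/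
/-!
Split `ℝ` at `0`. For `t > 0` the integrand equals `t^{n+1} e^{i(z+ζ)t}` at `t` and
`(-1)^{n+1} t^{n+1} e^{i(ζ-z)t}` at `-t`; both frequencies have imaginary part `Im ζ > 0`. For
`Re b > 0` the Laplace integral `∫_0^∞ t^m e^{-bt} dt = m!/b^{m+1}` follows by integrating by
parts, and with `b = -iw` it reads `∫_0^∞ t^m e^{iwt} dt = m! i^{m+1}/w^{m+1}`.
-/

open MeasureTheory Complex Set Filter Topology

section LaplacePow

variable {b : ℂ}

lemma norm_pow_mul_cexp_neg_mul {t : ℝ} (ht : 0 ≤ t) (m : ℕ) :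
    ‖(t : ℂ) ^ m * cexp (-(b * t))‖ = t ^ (m : ℝ) * Real.exp (-b.re * t) := by
  rw [norm_mul, norm_pow, norm_real, Real.norm_of_nonneg ht, norm_exp, Real.rpow_natCast]
  simp

lemma integrableOn_Ioi_pow_mul_cexp_neg_mul (hb : 0 < b.re) (m : ℕ) :
    IntegrableOn (fun t : ℝ => (t : ℂ) ^ m * cexp (-(b * t))) (Ioi 0) := by
  have hreal := integrableOn_rpow_mul_exp_neg_mul_rpow
    (neg_one_lt_zero.trans_le m.cast_nonneg) zero_lt_one hb
  simp only [Real.rpow_one] at hreal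
  refine hreal.mono' (by fun_prop) ?_
  filter_upwards [ae_restrict_mem measurableSet_Ioi] with t ht
  exact (norm_pow_mul_cexp_neg_mul ht.out.le m).le

lemma tendsto_pow_mul_cexp_neg_mul_atTop (hb : 0 < b.re) (m : ℕ) :
    Tendsto (fun t : ℝ => (t : ℂ) ^ m * cexp (-(b * t))) atTop (𝓝 0) := by
  refine squeeze_zero_norm' ?_ (tendsto_rpow_mul_exp_neg_mul_atTop_nhds_zero (m : ℝ) _ hb)
  filter_upwards [eventually_ge_atTop 0] with t ht
  exact (norm_pow_mul_cexp_neg_mul ht m).le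

lemma hasDerivAt_pow_succ_mul_cexp_neg_mul (m : ℕ) (t : ℝ) :
    HasDerivAt (fun t : ℝ => (t : ℂ) ^ (m + 1) * cexp (-(b * t)))
      ((m + 1) * ((t : ℂ) ^ m * cexp (-(b * t))) - b * ((t : ℂ) ^ (m + 1) * cexp (-(b * t))))
      t := by
  have hpow : HasDerivAt (fun t : ℝ => (t : ℂ) ^ (m + 1)) ((m + 1) * (t : ℂ) ^ m) t := by
    simpa using (hasDerivAt_pow (m + 1) (t : ℂ)).comp_ofReal
  have hexp : HasDerivAt (fun y : ℂ => cexp (-(b * y))) (cexp (-(b * t)) * -b) t := by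
    simpa using ((hasDerivAt_id (t : ℂ)).const_mul b).neg.cexp
  exact (hpow.mul hexp.comp_ofReal).congr_deriv (by ring)

lemma integral_Ioi_pow_succ_mul_cexp_neg_mul (hb : 0 < b.re) (m : ℕ) :
    b * ∫ t in Ioi (0 : ℝ), (t : ℂ) ^ (m + 1) * cexp (-(b * t)) =
      (m + 1) * ∫ t in Ioi (0 : ℝ), (t : ℂ) ^ m * cexp (-(b * t)) := by
  have hftc := integral_Ioi_of_hasDerivAt_of_tendsto'
    (fun t _ => hasDerivAt_pow_succ_mul_cexp_neg_mul m t)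
    (((integrableOn_Ioi_pow_mul_cexp_neg_mul hb m).const_mul _).sub
      ((integrableOn_Ioi_pow_mul_cexp_neg_mul hb (m + 1)).const_mul _))
    (tendsto_pow_mul_cexp_neg_mul_atTop hb (m + 1))
  rw [integral_sub ((integrableOn_Ioi_pow_mul_cexp_neg_mul hb m).const_mul _)
    ((integrableOn_Ioi_pow_mul_cexp_neg_mul hb (m + 1)).const_mul _), integral_const_mul,
    integral_const_mul] at hftc
  simp only [ofReal_zero, zero_pow m.succ_ne_zero, zero_mul, sub_zero] at hftc
  linear_combination -hftc

lemma integral_Ioi_pow_mul_cexp_neg_mul (hb : 0 < b.re) (m : ℕ) :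
    ∫ t in Ioi (0 : ℝ), (t : ℂ) ^ m * cexp (-(b * t)) = m.factorial / b ^ (m + 1) := by
  have hb0 : b ≠ 0 := fun h => by simp [h] at hb
  induction m with
  | zero =>
    simpa [neg_mul, div_neg, neg_div] using integral_exp_mul_complex_Ioi (a := -b) (by simpa) 0
  | succ m ih =>
    rw [← mul_right_inj' hb0, integral_Ioi_pow_succ_mul_cexp_neg_mul hb, ih, Nat.factorial_succ]
    push_cast
    field_simp
    ring

end LaplacePow

section FourierHalfLine

variable {w : ℂ}

lemma integrableOn_Ioi_pow_mul_cexp_I_mul (hw : 0 < w.im) (m : ℕ) :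
    IntegrableOn (fun t : ℝ => (t : ℂ) ^ m * cexp (I * w * t)) (Ioi 0) := by
  convert integrableOn_Ioi_pow_mul_cexp_neg_mul (b := -I * w) (by simpa) m using 4
  ring

lemma integral_Ioi_pow_mul_cexp_I_mul (hw : 0 < w.im) (m : ℕ) :
    ∫ t in Ioi (0 : ℝ), (t : ℂ) ^ m * cexp (I * w * t) =
      m.factorial * I ^ (m + 1) / w ^ (m + 1) := by
  have hw0 : w ≠ 0 := fun h => by simp [h] at hw
  simp_rw [show ∀ t : ℂ, I * w * t = -(-I * w * t) by intro t; ring]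
  rw [integral_Ioi_pow_mul_cexp_neg_mul (by simpa), ← inv_I, mul_pow, inv_pow]
  field_simp

end FourierHalfLine

section Reflection

variable {E : Type*} [NormedAddCommGroup E] {f : ℝ → E}

lemma integrableOn_Iic_of_integrableOn_Ioi_comp_neg
    (h : IntegrableOn (fun t => f (-t)) (Ioi 0)) : IntegrableOn f (Iic 0) :=
  Iff.mpr integrableOn_Iic_iff_integrableOn_Iio <| by
    simpa using IntegrableOn.comp_neg_Iio (c := (0 : ℝ)) (f := fun t => f (-t))
      (by simpa using h)

lemma integrable_of_integrableOn_Ioi_of_integrableOn_Ioi_comp_neg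
    (hpos : IntegrableOn f (Ioi 0)) (hneg : IntegrableOn (fun t => f (-t)) (Ioi 0)) :
    Integrable f := by
  rw [← integrableOn_univ, ← Iic_union_Ioi (a := 0)]
  exact (integrableOn_Iic_of_integrableOn_Ioi_comp_neg hneg).union hpos

lemma integral_eq_integral_Ioi_add_integral_Ioi_comp_neg [NormedSpace ℝ E]
    (hpos : IntegrableOn f (Ioi 0)) (hneg : IntegrableOn (fun t => f (-t)) (Ioi 0)) :
    ∫ t, f t = (∫ t in Ioi 0, f t) + ∫ t in Ioi 0, f (-t) := by
  rw [integral_comp_neg_Ioi, neg_zero, add_comm, intervalIntegral.integral_Iic_add_Ioi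
    (integrableOn_Iic_of_integrableOn_Ioi_comp_neg hneg) hpos]

end Reflection

/-- For `n ∈ ℕ` and `ζ ∈ ℂ` with `Im ζ > 0`, for every real `z` the function
`t ↦ t^{n+1} e^{iζ|t|} e^{izt}` is integrable on `ℝ`, the numbers `z-ζ` and `z+ζ`
are nonzero, and
`∫_ℝ t^{n+1} e^{iζ|t|} e^{izt} dt = (n+1)! · i^n · ((z-ζ)^{-(n+2)} - (z+ζ)^{-(n+2)})`. -/
theorem fourier_transform_power_exp (n : ℕ) (ζ : ℂ) (hζ : 0 < ζ.im) (z : ℝ) :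
    Integrable (fun t : ℝ =>
      (t : ℂ) ^ (n + 1) * Complex.exp (Complex.I * ζ * |t|) * Complex.exp (Complex.I * z * t)) ∧
    (z : ℂ) - ζ ≠ 0 ∧ (z : ℂ) + ζ ≠ 0 ∧
    (∫ t : ℝ, (t : ℂ) ^ (n + 1) * Complex.exp (Complex.I * ζ * |t|)
        * Complex.exp (Complex.I * z * t)) =
      ((n + 1).factorial : ℂ) * Complex.I ^ n *
        ((((z : ℂ) - ζ) ^ (n + 2))⁻¹ - (((z : ℂ) + ζ) ^ (n + 2))⁻¹) := by
  set f : ℝ → ℂ := fun t =>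
    (t : ℂ) ^ (n + 1) * cexp (I * ζ * |t|) * cexp (I * z * t)
  have hzζ : 0 < ((z : ℂ) + ζ).im := by simpa using hζ
  have hζz : 0 < (ζ - z).im := by simpa using hζ
  have hpos : EqOn f (fun t => (t : ℂ) ^ (n + 1) * cexp (I * (z + ζ) * t)) (Ioi 0) := by
    intro t ht
    simp only [f, abs_of_pos ht.out, mul_assoc, ← exp_add]
    ring_nf
  have hneg : EqOn (fun t => f (-t))
      (fun t => (-1) ^ (n + 1) * ((t : ℂ) ^ (n + 1) * cexp (I * (ζ - z) * t))) (Ioi 0) := by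
    intro t ht
    simp only [f, abs_neg, abs_of_pos ht.out, ofReal_neg, neg_pow (t : ℂ), mul_assoc,
      ← exp_add]
    ring_nf
  have hint_pos : IntegrableOn f (Ioi 0) :=
    (integrableOn_Ioi_pow_mul_cexp_I_mul hzζ _).congr_fun hpos.symm measurableSet_Ioi
  have hint_neg : IntegrableOn (fun t => f (-t)) (Ioi 0) :=
    IntegrableOn.congr_fun ((integrableOn_Ioi_pow_mul_cexp_I_mul hζz _).const_mul _) hneg.symm
      measurableSet_Ioi
  refine ⟨integrable_of_integrableOn_Ioi_of_integrableOn_Ioi_comp_neg hint_pos hint_neg,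
    fun h => hζ.ne' (by simpa using congrArg im h), fun h => hzζ.ne' (by simp [h]), ?_⟩
  rw [integral_eq_integral_Ioi_add_integral_Ioi_comp_neg hint_pos hint_neg,
    setIntegral_congr_fun measurableSet_Ioi hpos, setIntegral_congr_fun measurableSet_Ioi hneg,
    integral_const_mul, integral_Ioi_pow_mul_cexp_I_mul hzζ, integral_Ioi_pow_mul_cexp_I_mul hζz,
    show ζ - z = -((z : ℂ) - ζ) by ring, neg_pow ((z : ℂ) - ζ), pow_succ (-1 : ℂ) (n + 1),
    pow_succ I (n + 1), pow_succ I n, mul_assoc, I_mul_I]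
  field_simp
  ring
end

section
/- Let p ≥ 1 be an integer, let α_0, α_1, …, α_p be positive reals, let β be a real with 0 < β < min_i α_i, and let C > 0. Let ψ : ℝ → ℝ be nondecreasing and right-continuous with |ψ(u) - Σ_{i=0}^p u^{α_i}/α_i| ≤ C u^β for all u ≥ 2. Then there exists C' > 0 such that for all x ≥ 4: |∫_{(2,x]} (log u)^{-1} dμ_ψ(u) - Σ_{i=0}^p li(x^{α_i})| ≤ C' x^β / log x. -/
/-!
Integration by parts against the weight `1 / log u`, whose derivative is `-1 / (u log² u)`,
turns the Stieltjes integral `∫_{(2,x]} dψ(u) / log u` into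
`ψ(x) / log x - ψ(2) / log 2 + ∫_2^x ψ(t) dt / (t log² t)`.
The substitution `s = t^α` gives `li(x^α) - li(2^α) = ∫_2^x d(t^α/α) / log t`, which
integrates by parts in the same way, with `Φ(t) = ∑ t^{α_i}/α_i` in place of `ψ`.
In the difference only the error `E = ψ - Φ` survives:
`E(x) / log x + ∫_2^x E(t) dt / (t log² t) + O(1)`. When `|E(t)| ≤ C t^β`, that integral
is `O(x^β / log x)`: split it at `√x`, above which `log t ≥ log x / 2`.
-/

open MeasureTheory

/-- The logarithmic integral `li(z) = ∫_2^z dt / log t`. -/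
noncomputable def li (z : ℝ) : ℝ := ∫ t in (2 : ℝ)..z, (Real.log t)⁻¹

open Real Set

theorem continuousOn_inv_log : ContinuousOn (fun t => (log t)⁻¹) (Ioi 1) :=
  (continuousOn_log.mono fun _ ht => (zero_lt_one.trans ht).ne').inv₀ fun _ ht => (log_pos ht).ne'

theorem continuousOn_inv_mul_log_sq : ContinuousOn (fun t => (t * log t ^ 2)⁻¹) (Ioi 1) :=
  (continuousOn_id.mul
    ((continuousOn_log.mono fun _ ht => (zero_lt_one.trans ht).ne').pow 2)).inv₀ fun _ ht =>
      mul_ne_zero (zero_lt_one.trans ht).ne' (pow_ne_zero 2 (log_pos ht).ne')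

theorem hasDerivAt_inv_log {t : ℝ} (ht : 1 < t) :
    HasDerivAt (fun y => (log y)⁻¹) (-(t * log t ^ 2)⁻¹) t := by
  have h : HasDerivAt (fun y => (log y)⁻¹) (-t⁻¹ / log t ^ 2) t :=
    (hasDerivAt_log (zero_lt_one.trans ht).ne').inv (log_pos ht).ne'
  rwa [mul_inv, ← div_eq_mul_inv, ← neg_div]

theorem intervalIntegrable_rpow_mul_inv_mul_log_sq {β a b : ℝ} (ha : 1 < a) (hb : 1 < b) :
    IntervalIntegrable (fun t => t ^ β * (t * log t ^ 2)⁻¹) volume a b := by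
  have hI : uIcc a b ⊆ Ioi 1 := ordConnected_Ioi.uIcc_subset ha hb
  exact ((continuousOn_id.rpow_const fun t ht => Or.inl (zero_lt_one.trans (hI ht)).ne').mul
    (continuousOn_inv_mul_log_sq.mono hI)).intervalIntegrable

theorem li_sub_li {a b : ℝ} (ha : 1 < a) (hb : 1 < b) :
    li b - li a = ∫ t in a..b, (log t)⁻¹ :=
  intervalIntegral.integral_interval_sub_left
    (continuousOn_inv_log.mono (ordConnected_Ioi.uIcc_subset one_lt_two hb)).intervalIntegrable
    (continuousOn_inv_log.mono (ordConnected_Ioi.uIcc_subset one_lt_two ha)).intervalIntegrable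

theorem li_rpow_sub_li_rpow {α a b : ℝ} (hα : 0 < α) (ha : 1 < a) (hb : 1 < b) :
    li (b ^ α) - li (a ^ α) = ∫ t in a..b, (log t)⁻¹ * t ^ (α - 1) := by
  have hI : uIcc a b ⊆ Ioi 1 := ordConnected_Ioi.uIcc_subset ha hb
  rw [li_sub_li (one_lt_rpow ha hα) (one_lt_rpow hb hα),
    ← intervalIntegral.integral_comp_mul_deriv' (f := (· ^ α))
      (f' := fun t => α * t ^ (α - 1)) (g := fun s => (log s)⁻¹)]
  · refine intervalIntegral.integral_congr fun t ht => ?_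
    have ht1 : 1 < t := hI ht
    have := log_pos ht1
    simp only [Function.comp, log_rpow (zero_lt_one.trans ht1)]
    field_simp
  · exact fun t ht => hasDerivAt_rpow_const (Or.inl (zero_lt_one.trans (hI ht)).ne')
  · exact continuousOn_const.mul
      (continuousOn_id.rpow_const fun t ht => Or.inl (zero_lt_one.trans (hI ht)).ne')
  · exact continuousOn_inv_log.mono (image_subset_iff.2 fun t ht => one_lt_rpow (hI ht) hα)

theorem Monotone.intervalIntegrable_mul {f g : ℝ → ℝ} {a b : ℝ} (hf : Monotone f)
    (hg : IntervalIntegrable g volume a b) :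
    IntervalIntegrable (fun t => f t * g t) volume a b := by
  rw [intervalIntegrable_iff] at hg ⊢
  refine hg.bdd_mul (c := |f (min a b)| + |f (max a b)|) hf.measurable.aestronglyMeasurable ?_
  filter_upwards [ae_restrict_mem measurableSet_uIoc] with t ht
  rw [norm_eq_abs, abs_le]
  constructor <;> linarith [hf ht.1.le, hf ht.2, neg_abs_le (f (min a b)),
    le_abs_self (f (max a b)), abs_nonneg (f (min a b)), abs_nonneg (f (max a b))]

namespace StieltjesFunction

variable (f : StieltjesFunction ℝ) {w w' : ℝ → ℝ} {a b : ℝ}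

instance isFiniteMeasure_restrict_Ioc (a b : ℝ) :
    IsFiniteMeasure (f.measure.restrict (Ioc a b)) :=
  isFiniteMeasure_restrict.2 (by rw [f.measure_Ioc]; exact ENNReal.ofReal_ne_top)

/-- Both sides are the integral of `w'(t)` over the triangle `a < u ≤ t ≤ b`
with respect to `df(u) dt` (Fubini). -/
theorem integral_Ioc_sub_eq_integral_sub_mul_deriv (hab : a ≤ b)
    (hw : ∀ t ∈ Icc a b, HasDerivAt w (w' t) t) (hw' : IntervalIntegrable w' volume a b) :
    ∫ u in Ioc a b, (w b - w u) ∂f.measure = ∫ t in a..b, (f t - f a) * w' t := by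
  set μ := f.measure.restrict (Ioc a b)
  set ν := volume.restrict (Ioc a b)
  set F : ℝ → ℝ → ℝ := fun u t => (Ici u).indicator w' t
  have hF : Integrable (Function.uncurry F) (μ.prod ν) := by
    have : Function.uncurry F = {p : ℝ × ℝ | p.1 ≤ p.2}.indicator fun p => w' p.2 := by
      ext ⟨u, t⟩; simp [F, indicator]
    rw [this]
    exact (((intervalIntegrable_iff_integrableOn_Ioc_of_le hab).1 hw').comp_snd μ).indicator
      (measurableSet_le measurable_fst measurable_snd)
  have hinner_t : ∀ u ∈ Ioc a b, ∫ t, F u t ∂ν = w b - w u := by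
    intro u hu
    have hset : Ici u ∩ Ioc a b = Icc u b := by
      ext t
      simp only [mem_inter_iff, mem_Ici, mem_Ioc, mem_Icc]
      exact ⟨fun ⟨hut, _, htb⟩ => ⟨hut, htb⟩,
        fun ⟨hut, htb⟩ => ⟨hut, hu.1.trans_le hut, htb⟩⟩
    rw [integral_indicator measurableSet_Ici, Measure.restrict_restrict measurableSet_Ici, hset,
      integral_Icc_eq_integral_Ioc, ← intervalIntegral.integral_of_le hu.2]
    refine intervalIntegral.integral_eq_sub_of_hasDerivAt (fun t ht => hw t ?_) (hw'.mono_set ?_)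
    · rw [uIcc_of_le hu.2] at ht; exact ⟨hu.1.le.trans ht.1, ht.2⟩
    · rw [uIcc_of_le hu.2, uIcc_of_le hab]; exact Icc_subset_Icc_left hu.1.le
  have hinner_u : ∀ t ∈ Ioc a b, ∫ u, F u t ∂μ = (f t - f a) * w' t := by
    intro t ht
    have : (F · t) = (Iic t).indicator fun _ => w' t := by
      ext u; simp [F, indicator]
    rw [this, integral_indicator measurableSet_Iic, setIntegral_const, measureReal_def,
      Measure.restrict_apply measurableSet_Iic, Iic_inter_Ioc_of_le ht.2, f.measure_Ioc,
      ENNReal.toReal_ofReal (sub_nonneg.2 (f.mono ht.1.le)), smul_eq_mul]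
  have hswap := integral_integral_swap hF
  rwa [setIntegral_congr_fun measurableSet_Ioc hinner_t,
    setIntegral_congr_fun measurableSet_Ioc hinner_u,
    ← intervalIntegral.integral_of_le (μ := volume) hab] at hswap

theorem integral_Ioc_eq_sub_integral_mul_deriv (hab : a ≤ b)
    (hw : ∀ t ∈ Icc a b, HasDerivAt w (w' t) t) (hw' : IntervalIntegrable w' volume a b) :
    ∫ u in Ioc a b, w u ∂f.measure = f b * w b - f a * w a - ∫ t in a..b, f t * w' t := by
  have h := f.integral_Ioc_sub_eq_integral_sub_mul_deriv hab hw hw'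
  have hw_int : IntegrableOn w (Ioc a b) f.measure :=
    (ContinuousOn.integrableOn_Icc fun t ht => (hw t ht).continuousAt.continuousWithinAt).mono_set
      Ioc_subset_Icc_self
  have hFTC : ∫ t in a..b, w' t = w b - w a :=
    intervalIntegral.integral_eq_sub_of_hasDerivAt (fun t ht => hw t (uIcc_of_le hab ▸ ht)) hw'
  simp_rw [sub_mul] at h
  rw [integral_sub (integrable_const _) hw_int, setIntegral_const, measureReal_def,
    f.measure_Ioc, ENNReal.toReal_ofReal (sub_nonneg.2 (f.mono hab)), smul_eq_mul,
    intervalIntegral.integral_sub (f.mono.intervalIntegrable_mul hw') (hw'.const_mul _),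
    intervalIntegral.integral_const_mul, hFTC] at h
  linarith

end StieltjesFunction

theorem integral_Ioc_inv_log_sub_sum_li {ι : Type*} [Fintype ι] (ψ : StieltjesFunction ℝ)
    {α : ι → ℝ} (hα : ∀ i, 0 < α i) {a b : ℝ} (ha : 1 < a) (hab : a ≤ b) :
    (∫ u in Ioc a b, (log u)⁻¹ ∂ψ.measure) - ∑ i, li (b ^ α i) =
      (ψ b - ∑ i, b ^ α i / α i) / log b - (ψ a - ∑ i, a ^ α i / α i) / log a
        + (∫ t in a..b, (ψ t - ∑ i, t ^ α i / α i) * (t * log t ^ 2)⁻¹)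
        - ∑ i, li (a ^ α i) := by
  set Φ : ℝ → ℝ := fun t => ∑ i, t ^ α i / α i
  set Φ' : ℝ → ℝ := fun t => ∑ i, t ^ (α i - 1)
  have hI : uIcc a b ⊆ Ioi 1 := ordConnected_Ioi.uIcc_subset ha (ha.trans_le hab)
  have hw : ∀ t ∈ uIcc a b, HasDerivAt (fun y => (log y)⁻¹) (-(t * log t ^ 2)⁻¹) t :=
    fun t ht => hasDerivAt_inv_log (hI ht)
  have hw' : IntervalIntegrable (fun t => -(t * log t ^ 2)⁻¹) volume a b :=
    (continuousOn_inv_mul_log_sq.mono hI).neg.intervalIntegrable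
  have hΦ : ∀ t ∈ uIcc a b, HasDerivAt Φ (Φ' t) t := by
    intro t ht
    refine HasDerivAt.fun_sum fun i _ => ?_
    have h := (hasDerivAt_rpow_const (p := α i) (Or.inl (zero_lt_one.trans (hI ht)).ne')).div_const
      (α i)
    rwa [mul_div_cancel_left₀ _ (hα i).ne'] at h
  have hΦ' : IntervalIntegrable Φ' volume a b :=
    (continuousOn_finsetSum _ fun i _ => continuousOn_id.rpow_const fun t ht =>
      Or.inl (zero_lt_one.trans (hI ht)).ne').intervalIntegrable
  have hli : ∫ t in a..b, (log t)⁻¹ * Φ' t = ∑ i, (li (b ^ α i) - li (a ^ α i)) := by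
    simp only [Φ', Finset.mul_sum]
    rw [intervalIntegral.integral_finsetSum fun i _ => ContinuousOn.intervalIntegrable
      (u := fun t => (log t)⁻¹ * t ^ (α i - 1)) ((continuousOn_inv_log.mono hI).mul
      (continuousOn_id.rpow_const fun t ht => Or.inl (zero_lt_one.trans (hI ht)).ne'))]
    exact Finset.sum_congr rfl fun i _ => (li_rpow_sub_li_rpow (hα i) ha (ha.trans_le hab)).symm
  have hψ := ψ.integral_Ioc_eq_sub_integral_mul_deriv hab
    (fun t ht => hw t (uIcc_of_le hab ▸ ht)) hw'
  have hΦ_parts := intervalIntegral.integral_mul_deriv_eq_deriv_mul hw hΦ hw' hΦ'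
  have hsplit : ∫ t in a..b, (ψ t - Φ t) * (t * log t ^ 2)⁻¹
      = (∫ t in a..b, -(t * log t ^ 2)⁻¹ * Φ t)
        - ∫ t in a..b, ψ t * -(t * log t ^ 2)⁻¹ := by
    rw [← intervalIntegral.integral_sub
      (hw'.mul_continuousOn fun t ht => (hΦ t ht).continuousAt.continuousWithinAt)
      (ψ.mono.intervalIntegrable_mul hw')]
    exact intervalIntegral.integral_congr fun t _ => by ring
  rw [Finset.sum_sub_distrib, hΦ_parts] at hli
  rw [hsplit, hψ]
  simp only [Φ] at hli ⊢
  linear_combination hli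

theorem integral_rpow_mul_inv_mul_log_sq_le {β s b : ℝ} (hβ : 0 < β) (hs : 1 < s)
    (hsb : s ≤ b) :
    ∫ t in s..b, t ^ β * (t * log t ^ 2)⁻¹ ≤ b ^ β / (β * log s ^ 2) := by
  have hlogs := log_pos hs
  calc ∫ t in s..b, t ^ β * (t * log t ^ 2)⁻¹
      ≤ ∫ t in s..b, t ^ (β - 1) / log s ^ 2 := by
        refine intervalIntegral.integral_mono_on hsb
          (intervalIntegrable_rpow_mul_inv_mul_log_sq hs (hs.trans_le hsb)) ?_ fun t ht => ?_
        · exact ((continuousOn_id.rpow_const fun t ht => Or.inl (zero_lt_one.trans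
            (ordConnected_Ioi.uIcc_subset hs (hs.trans_le hsb) ht)).ne').div_const
            _).intervalIntegrable
        · have ht0 : 0 < t := zero_lt_one.trans (hs.trans_le ht.1)
          have hlog : log s ≤ log t := log_le_log (zero_lt_one.trans hs) ht.1
          rw [rpow_sub_one ht0.ne', mul_inv, ← mul_assoc, ← div_eq_mul_inv, ← div_eq_mul_inv]
          gcongr
    _ = (b ^ β - s ^ β) / β / log s ^ 2 := by
        rw [intervalIntegral.integral_div, integral_rpow (Or.inl (by linarith)), sub_add_cancel]
    _ ≤ b ^ β / (β * log s ^ 2) := by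
        rw [div_div]
        gcongr
        linarith [rpow_nonneg (zero_lt_one.trans hs).le β]

theorem rpow_half_mul_log_le {x β : ℝ} (hx : 0 ≤ x) (hβ : 0 < β) :
    x ^ (β / 2) * log x ≤ 2 / β * x ^ β := by
  have h := log_le_rpow_div hx (half_pos hβ)
  calc x ^ (β / 2) * log x ≤ x ^ (β / 2) * (x ^ (β / 2) / (β / 2)) := by gcongr
    _ = 2 / β * x ^ β := by
        rw [mul_div_assoc', ← rpow_add' hx (by positivity), add_halves]
        field_simp

theorem one_le_log_of_four_le {x : ℝ} (hx : 4 ≤ x) : 1 ≤ log x := by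
  rw [le_log_iff_exp_le (by linarith)]
  linarith [exp_one_lt_d9]

theorem exists_integral_rpow_mul_inv_mul_log_sq_le {β : ℝ} (hβ : 0 < β) :
    ∃ K ≥ 0, ∀ x ≥ 4,
      ∫ t in (2 : ℝ)..x, t ^ β * (t * log t ^ 2)⁻¹ ≤ K * x ^ β / log x := by
  refine ⟨2 / (β ^ 2 * log 2 ^ 2) + 4 / β, by positivity, fun x hx => ?_⟩
  have hx0 : 0 < x := by linarith
  have hlogx := one_le_log_of_four_le hx
  set s := √x
  have hs : 2 ≤ s := le_sqrt_of_sq_le (by linarith)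
  have hsx : s ≤ x := (sqrt_le_left hx0.le).2 (by nlinarith)
  have hsβ : s ^ β = x ^ (β / 2) := by
    rw [show s = √x from rfl, sqrt_eq_rpow, ← rpow_mul hx0.le, one_div_mul_eq_div]
  have hlow : ∫ t in (2 : ℝ)..s, t ^ β * (t * log t ^ 2)⁻¹
      ≤ 2 / (β ^ 2 * log 2 ^ 2) * x ^ β / log x :=
    calc _ ≤ s ^ β / (β * log 2 ^ 2) := integral_rpow_mul_inv_mul_log_sq_le hβ one_lt_two hs
      _ = x ^ (β / 2) * log x / (β * log 2 ^ 2) / log x := by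
          rw [hsβ]; field_simp
      _ ≤ 2 / β * x ^ β / (β * log 2 ^ 2) / log x := by
          gcongr ?_ / _ / _; exact rpow_half_mul_log_le hx0.le hβ
      _ = 2 / (β ^ 2 * log 2 ^ 2) * x ^ β / log x := by ring
  have hhigh : ∫ t in s..x, t ^ β * (t * log t ^ 2)⁻¹ ≤ 4 / β * x ^ β / log x :=
    calc _ ≤ x ^ β / (β * log s ^ 2) :=
          integral_rpow_mul_inv_mul_log_sq_le hβ (by linarith) hsx
      _ = 4 / β * x ^ β / log x / log x := by
          rw [log_sqrt hx0.le]; field_simp; ring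
      _ ≤ 4 / β * x ^ β / log x := div_le_self (by positivity) hlogx
  rw [← intervalIntegral.integral_add_adjacent_intervals
    (intervalIntegrable_rpow_mul_inv_mul_log_sq (b := s) one_lt_two (by linarith))
    (intervalIntegrable_rpow_mul_inv_mul_log_sq (b := x) (by linarith) (by linarith)), add_mul,
    add_div]
  exact add_le_add hlow hhigh

theorem abs_integral_mul_inv_mul_log_sq_le {E : ℝ → ℝ} {C β a b : ℝ} (ha : 1 < a)
    (hab : a ≤ b) (hE : ∀ t ∈ Ioc a b, |E t| ≤ C * t ^ β) :
    |∫ t in a..b, E t * (t * log t ^ 2)⁻¹|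
      ≤ C * ∫ t in a..b, t ^ β * (t * log t ^ 2)⁻¹ := by
  rw [← norm_eq_abs, ← intervalIntegral.integral_const_mul]
  refine intervalIntegral.norm_integral_le_of_norm_le hab (ae_of_all _ fun t ht => ?_)
    ((intervalIntegrable_rpow_mul_inv_mul_log_sq ha (ha.trans_le hab)).const_mul C)
  have ht1 : 1 < t := ha.trans ht.1
  have := log_pos ht1
  have : 0 < t := zero_lt_one.trans ht1
  rw [norm_mul, norm_eq_abs, norm_of_nonneg (by positivity), ← mul_assoc]
  gcongr
  exact hE t ht

theorem le_mul_rpow_div_log {c β x : ℝ} (hc : 0 ≤ c) (hβ : 0 < β) (hx : 1 < x) :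
    c ≤ c / β * x ^ β / log x := by
  rw [le_div_iff₀ (log_pos hx)]
  calc c * log x ≤ c * (x ^ β / β) := by
        gcongr; exact log_le_rpow_div (zero_lt_one.trans hx).le hβ
    _ = c / β * x ^ β := by ring

theorem tauberian_counting_asymptotics_general (p : ℕ) (α : Fin (p + 1) → ℝ)
    (hα : ∀ i, 0 < α i) (β : ℝ) (hβ : 0 < β) (C : ℝ) (hC : 0 < C)
    (ψ : StieltjesFunction ℝ)
    (hψ : ∀ u : ℝ, 2 ≤ u → |ψ u - ∑ i, u ^ α i / α i| ≤ C * u ^ β) :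
    ∃ C' > 0, ∀ x : ℝ, 4 ≤ x →
      |(∫ u in Set.Ioc (2 : ℝ) x, (Real.log u)⁻¹ ∂ψ.measure) - ∑ i, li (x ^ α i)|
        ≤ C' * x ^ β / Real.log x := by
  obtain ⟨K, hK, hint⟩ := exists_integral_rpow_mul_inv_mul_log_sq_le hβ
  set E : ℝ → ℝ := fun t => ψ t - ∑ i, t ^ α i / α i
  set c := |E 2 / log 2 + ∑ i, li (2 ^ α i)|
  refine ⟨C + C * K + c / β, by positivity, fun x hx => ?_⟩
  have hlog : 0 < log x := by linarith [one_le_log_of_four_le hx]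
  have herr : |∫ t in (2 : ℝ)..x, E t * (t * log t ^ 2)⁻¹| ≤ C * (K * x ^ β / log x) :=
    (abs_integral_mul_inv_mul_log_sq_le one_lt_two (by linarith) fun t ht => hψ t ht.1.le).trans
      (by gcongr; exact hint x hx)
  rw [integral_Ioc_inv_log_sub_sum_li ψ hα one_lt_two (by linarith)]
  calc _ = |E x / log x + (∫ t in (2 : ℝ)..x, E t * (t * log t ^ 2)⁻¹)
        - (E 2 / log 2 + ∑ i, li (2 ^ α i))| := by congr 1; simp only [E]; ring
    _ ≤ |E x / log x| + |∫ t in (2 : ℝ)..x, E t * (t * log t ^ 2)⁻¹| + c :=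
        (abs_sub _ _).trans (by gcongr; exact abs_add_le _ _)
    _ ≤ C * x ^ β / log x + C * (K * x ^ β / log x) + c / β * x ^ β / log x := by
        rw [abs_div, abs_of_pos hlog]
        gcongr
        · exact hψ x (by linarith)
        · exact le_mul_rpow_div_log (abs_nonneg _) hβ (by linarith)
    _ = (C + C * K + c / β) * x ^ β / log x := by ring

/-- Tauberian step converting the asymptotics of `ψ(x)` into counting asymptotics:
if `ψ` is nondecreasing and right-continuous with
`|ψ(u) - Σ_{i=0}^p u^{α_i}/α_i| ≤ C u^β` for `u ≥ 2`, where the `α_i` are positive and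
`0 < β < min_i α_i`, then there is `C' > 0` such that for all `x ≥ 4`,
`|∫_{(2,x]} (log u)⁻¹ dμ_ψ(u) - Σ_{i=0}^p li(x^{α_i})| ≤ C' x^β / log x`. -/
theorem tauberian_counting_asymptotics (p : ℕ) (hp : 1 ≤ p) (α : Fin (p + 1) → ℝ)
    (hα : ∀ i, 0 < α i) (β : ℝ) (hβ : 0 < β) (hβα : ∀ i, β < α i) (C : ℝ) (hC : 0 < C)
    (ψ : StieltjesFunction ℝ)
    (hψ : ∀ u : ℝ, 2 ≤ u → |ψ u - ∑ i, u ^ α i / α i| ≤ C * u ^ β) :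
    ∃ C' > 0, ∀ x : ℝ, 4 ≤ x →
      |(∫ u in Set.Ioc (2 : ℝ) x, (Real.log u)⁻¹ ∂ψ.measure) - ∑ i, li (x ^ α i)|
        ≤ C' * x ^ β / Real.log x :=
  tauberian_counting_asymptotics_general p α hα β hβ C hC ψ hψ
end

section
/- Let n ≥ 1 be an integer and let a, C, C₁, C₂ > 0. There exists C' > 0, depending only on n, a, C, C₁ and C₂, with the following property. Let x, y be reals with x > e^a and 0 < y ≤ x. Let (s_j)_{j∈ℕ} be complex numbers with |s_j| ≥ 1 and Re(s_j) ≤ n/2 for all j, and let (m_j)_{j∈ℕ} be nonnegative reals such that Σ_{j : |s_j| ≤ R} m_j ≤ C R^{n+1} for every real R ≥ 1. Let φ : ℝ → ℝ be a C^∞ function with 0 ≤ φ ≤ 1, φ(t) = 0 for t ∉ [a/2, log(x+y)], and such that: |φ'(t)| ≤ C₁ for all t ≤ log x, |φ'(t)| ≤ C₁ (x/y) for all t, |φ^{(n+2)}(t)| ≤ C₂ for all t ≤ log x, and |φ^{(n+2)}(t)| ≤ C₂ (x/y)^{n+2} for all t. Then Σ_j m_j |∫_0^∞ e^{s_j t}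 φ(t) dt| ≤ C' x^{n/2} (x/y)^n. -/
open MeasureTheory Set
open scoped BigOperators


lemma iterDeriv_zero_fun (k : ℕ) : iteratedDeriv k (fun _ : ℝ => (0:ℝ)) = fun _ => 0 := by
  induction k with
  | zero => simp
  | succ k ih => rw [iteratedDeriv_succ, ih]; simp

lemma iterDeriv_zero_of_nhds {φ : ℝ → ℝ} {x : ℝ} (h : ∀ᶠ t in nhds x, φ t = 0) (k : ℕ) :
    iteratedDeriv k φ x = 0 := by
  have : iteratedDeriv k φ x = iteratedDeriv k (fun _ => (0:ℝ)) x :=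
    Filter.EventuallyEq.iteratedDeriv_eq k h
  rw [this, iterDeriv_zero_fun]

lemma parts_step (s : ℂ) {φ : ℝ → ℝ} (hφ : ContDiff ℝ (⊤ : ℕ∞) φ) (A B : ℝ) (k : ℕ)
    (hA : iteratedDeriv k φ A = 0) (hB : iteratedDeriv k φ B = 0) :
    (∫ t in A..B, Complex.exp (s*t) * ((iteratedDeriv (k+1) φ t : ℝ) : ℂ))
      = -s * ∫ t in A..B, Complex.exp (s*t) * ((iteratedDeriv k φ t : ℝ) : ℂ) := by
  have hu : ∀ t ∈ uIcc A B, HasDerivAt (fun t : ℝ => Complex.exp (s*t)) (s * Complex.exp (s*t)) t := by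
    intro t _
    have h1 : HasDerivAt (fun t : ℝ => s * (t:ℂ)) s t := by
      simpa using ((hasDerivAt_id t).ofReal_comp.const_mul s)
    simpa [mul_comm] using h1.cexp
  have hv : ∀ t ∈ uIcc A B, HasDerivAt (fun t : ℝ => ((iteratedDeriv k φ t : ℝ) : ℂ))
      ((iteratedDeriv (k+1) φ t : ℝ) : ℂ) t := by
    intro t _
    have hd : HasDerivAt (iteratedDeriv k φ) (iteratedDeriv (k+1) φ t) t := by
      rw [iteratedDeriv_succ]
      exact ((hφ.differentiable_iteratedDeriv k (by exact WithTop.coe_lt_coe.2 (ENat.coe_lt_top k))) t).hasDerivAt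
    exact hd.ofReal_comp
  have hcont : ∀ j : ℕ, Continuous (fun t : ℝ => Complex.exp (s*t) * ((iteratedDeriv j φ t : ℝ) : ℂ)) := by
    intro j
    exact (Complex.continuous_exp.comp (continuous_const.mul Complex.continuous_ofReal)).mul
      (Complex.continuous_ofReal.comp (hφ.continuous_iteratedDeriv j (by exact WithTop.coe_le_coe.2 le_top)))
  have hint1 : IntervalIntegrable (fun t : ℝ => s * Complex.exp (s*t) * ((iteratedDeriv k φ t : ℝ):ℂ)) volume A B :=
    (((continuous_const : Continuous fun _ : ℝ => s).mul (hcont k)).congr (by intro t; simp only [Pi.mul_apply]; ring)).intervalIntegrable _ _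
  have hint2 : IntervalIntegrable (fun t : ℝ => Complex.exp (s*t) * ((iteratedDeriv (k+1) φ t : ℝ):ℂ)) volume A B :=
    (hcont (k+1)).intervalIntegrable _ _
  have key := intervalIntegral.integral_deriv_mul_eq_sub hu hv
    (((continuous_const.mul (Complex.continuous_exp.comp (continuous_const.mul Complex.continuous_ofReal))).intervalIntegrable _ _))
    ((Complex.continuous_ofReal.comp (hφ.continuous_iteratedDeriv (k+1) (by exact WithTop.coe_le_coe.2 le_top))).intervalIntegrable _ _)
  rw [hA, hB] at key
  simp only [Complex.ofReal_zero, mul_zero, sub_zero] at key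
  have split : (∫ t in A..B, (s * Complex.exp (s*t) * ((iteratedDeriv k φ t : ℝ):ℂ)
        + Complex.exp (s*t) * ((iteratedDeriv (k+1) φ t : ℝ):ℂ)))
      = (∫ t in A..B, s * Complex.exp (s*t) * ((iteratedDeriv k φ t : ℝ):ℂ))
        + ∫ t in A..B, Complex.exp (s*t) * ((iteratedDeriv (k+1) φ t : ℝ):ℂ) :=
    intervalIntegral.integral_add hint1 hint2
  rw [split] at key
  have : (∫ t in A..B, s * Complex.exp (s*t) * ((iteratedDeriv k φ t : ℝ):ℂ))
      = s * ∫ t in A..B, Complex.exp (s*t) * ((iteratedDeriv k φ t : ℝ):ℂ) := by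
    simp_rw [mul_assoc]
    exact intervalIntegral.integral_const_mul _ _
  rw [this] at key
  linear_combination key

lemma parts_iter (s : ℂ) {φ : ℝ → ℝ} (hφ : ContDiff ℝ (⊤ : ℕ∞) φ) (A B : ℝ)
    (hA : ∀ k, iteratedDeriv k φ A = 0) (hB : ∀ k, iteratedDeriv k φ B = 0) (k : ℕ) :
    (∫ t in A..B, Complex.exp (s*t) * ((iteratedDeriv k φ t : ℝ) : ℂ))
      = (-s)^k * ∫ t in A..B, Complex.exp (s*t) * ((φ t : ℝ) : ℂ) := by
  induction k with
  | zero => simp [iteratedDeriv_zero]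
  | succ k ih =>
      rw [parts_step s hφ A B k (hA k) (hB k), ih]
      ring


lemma integral_exp_mul' {c A B : ℝ} (hc : c ≠ 0) :
    ∫ t in A..B, Real.exp (c*t) = (Real.exp (c*B) - Real.exp (c*A))/c := by
  have h : ∀ t ∈ uIcc A B, HasDerivAt (fun t => Real.exp (c*t)/c) (Real.exp (c*t)) t := by
    intro t _
    have h1 : HasDerivAt (fun t : ℝ => c * t) c t := by
      simpa using (hasDerivAt_id t).const_mul c
    have := (h1.exp).div_const c
    rwa [mul_div_assoc, div_self hc, mul_one] at this
  rw [intervalIntegral.integral_eq_sub_of_hasDerivAt h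
    ((Real.continuous_exp.comp (continuous_const.mul continuous_id)).intervalIntegrable _ _)]
  ring

lemma norm_int_le (s : ℂ) (n : ℕ) (hs : s.re ≤ n/2) (g : ℝ → ℝ) (hg : Continuous g)
    (A B : ℝ) (hA : 0 ≤ A) (hAB : A ≤ B) :
    ‖∫ t in A..B, Complex.exp (s*t) * ((g t : ℝ) : ℂ)‖
      ≤ ∫ t in A..B, Real.exp ((n/2 : ℝ)*t) * |g t| := by
  have hgint : IntervalIntegrable (fun t => Real.exp ((n/2 : ℝ)*t) * |g t|) volume A B :=
    ((Real.continuous_exp.comp (continuous_const.mul continuous_id)).mul hg.abs).intervalIntegrable _ _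
  have hb : ∀ᵐ (t : ℝ) ∂(volume.restrict (Set.uIoc A B)),
      ‖Complex.exp (s*t) * ((g t : ℝ) : ℂ)‖ ≤ Real.exp ((n/2 : ℝ)*t) * |g t| := by
    refine (ae_restrict_iff' measurableSet_uIoc).2 (Filter.Eventually.of_forall ?_)
    intro t ht
    rw [Set.uIoc_of_le hAB] at ht
    have ht0 : 0 ≤ t := le_trans hA (le_of_lt ht.1)
    rw [norm_mul, Complex.norm_exp]
    have : (s * t).re = s.re * t := by simp [Complex.mul_re]
    rw [this]
    have hnr : ‖((g t : ℝ) : ℂ)‖ = |g t| := by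
      rw [Complex.norm_real, Real.norm_eq_abs]
    rw [hnr]
    exact mul_le_mul_of_nonneg_right (Real.exp_le_exp.2 (mul_le_mul_of_nonneg_right hs ht0)) (abs_nonneg _)
  have := intervalIntegral.norm_integral_le_abs_of_norm_le hb hgint
  refine this.trans (le_of_eq (abs_of_nonneg ?_))
  apply intervalIntegral.integral_nonneg hAB
  intro t _
  positivity


section dyadic
variable {n : ℕ} {C : ℝ} (s : ℕ → ℂ) (m : ℕ → ℝ)

-- index of the dyadic block
noncomputable def idx (s : ℕ → ℂ) (j : ℕ) : ℕ := ⌊Real.logb 2 ‖s j‖⌋₊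

lemma idx_le (hs1 : ∀ j, 1 ≤ ‖s j‖) (j : ℕ) : (2:ℝ)^(idx s j) ≤ ‖s j‖ := by
  have h0 : (0:ℝ) < ‖s j‖ := lt_of_lt_of_le one_pos (hs1 j)
  have h1 : (idx s j : ℝ) ≤ Real.logb 2 ‖s j‖ :=
    Nat.floor_le (Real.logb_nonneg one_lt_two (hs1 j))
  calc (2:ℝ)^(idx s j) = (2:ℝ)^((idx s j : ℝ)) := by rw [Real.rpow_natCast]
    _ ≤ (2:ℝ)^(Real.logb 2 ‖s j‖) := Real.rpow_le_rpow_of_exponent_le one_le_two h1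
    _ = ‖s j‖ := Real.rpow_logb two_pos (by norm_num) h0

lemma idx_lt (hs1 : ∀ j, 1 ≤ ‖s j‖) (j : ℕ) : ‖s j‖ < (2:ℝ)^(idx s j + 1) := by
  have h0 : (0:ℝ) < ‖s j‖ := lt_of_lt_of_le one_pos (hs1 j)
  have h1 : Real.logb 2 ‖s j‖ < (idx s j : ℝ) + 1 :=
    Nat.lt_floor_add_one _
  calc ‖s j‖ = (2:ℝ)^(Real.logb 2 ‖s j‖) := (Real.rpow_logb two_pos (by norm_num) h0).symm
    _ < (2:ℝ)^(((idx s j : ℝ) + 1)) := Real.rpow_lt_rpow_of_exponent_lt one_lt_two h1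
    _ = (2:ℝ)^(idx s j + 1) := by
        rw [← Real.rpow_natCast 2 (idx s j + 1)]
        norm_num

lemma dyadic_master (n : ℕ) (C : ℝ) (hs1 : ∀ j, 1 ≤ ‖s j‖)
    (hm : ∀ j, 0 ≤ m j)
    (hcount : ∀ R : ℝ, 1 ≤ R → ∀ F : Finset ℕ, (∀ j ∈ F, ‖s j‖ ≤ R) →
      ∑ j ∈ F, m j ≤ C * R ^ (n + 1))
    (F : Finset ℕ) (g u : ℕ → ℝ) (hu : ∀ k, 0 ≤ u k)
    (hgu : ∀ j ∈ F, g j ≤ u (idx s j))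
    (M : ℕ) (hM : ∀ j ∈ F, idx s j < M) :
    ∑ j ∈ F, m j * g j ≤ ∑ k ∈ Finset.range M, (C * ((2:ℝ)^(k+1))^(n+1)) * u k := by
  rw [← Finset.sum_fiberwise_of_maps_to (g := idx s) (t := Finset.range M)
    (fun j hj => Finset.mem_range.2 (hM j hj)) (fun j => m j * g j)]
  apply Finset.sum_le_sum
  intro k _
  have h1 : ∑ j ∈ F.filter (fun j => idx s j = k), m j * g j
      ≤ ∑ j ∈ F.filter (fun j => idx s j = k), m j * u k := by
    apply Finset.sum_le_sum
    intro j hj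
    obtain ⟨hjF, hjk⟩ := Finset.mem_filter.1 hj
    exact mul_le_mul_of_nonneg_left (hjk ▸ hgu j hjF) (hm j)
  have h2 : ∑ j ∈ F.filter (fun j => idx s j = k), m j ≤ C * ((2:ℝ)^(k+1)) ^ (n+1) := by
    apply hcount _ (one_le_pow₀ one_le_two)
    intro j hj
    obtain ⟨hjF, hjk⟩ := Finset.mem_filter.1 hj
    exact le_of_lt (hjk ▸ idx_lt s hs1 j)
  calc ∑ j ∈ F.filter (fun j => idx s j = k), m j * g j
      ≤ ∑ j ∈ F.filter (fun j => idx s j = k), m j * u k := h1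
    _ = (∑ j ∈ F.filter (fun j => idx s j = k), m j) * u k := by rw [Finset.sum_mul]
    _ ≤ (C * ((2:ℝ)^(k+1))^(n+1)) * u k := mul_le_mul_of_nonneg_right h2 (hu k)
end dyadic

section bounds
variable {C : ℝ} {s : ℕ → ℂ} {m : ℕ → ℝ}

lemma geomsum_le2 (r : ℝ) (hr : 2 ≤ r) (K : ℕ) :
    ∑ k ∈ Finset.range (K+1), r^k ≤ 2 * r^K := by
  have hr1 : r ≠ 1 := by linarith
  rw [geom_sum_eq hr1]
  rw [div_le_iff₀ (by linarith : (0:ℝ) < r - 1)]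
  have h1 : r^(K+1) = r^K * r := pow_succ r K
  nlinarith [pow_nonneg (by linarith : (0:ℝ) ≤ r) K]

lemma head_bound (n : ℕ) (hn : 1 ≤ n) (hC : 0 < C) (hs1 : ∀ j, 1 ≤ ‖s j‖)
    (hm : ∀ j, 0 ≤ m j)
    (hcount : ∀ R : ℝ, 1 ≤ R → ∀ F : Finset ℕ, (∀ j ∈ F, ‖s j‖ ≤ R) →
      ∑ j ∈ F, m j ≤ C * R ^ (n + 1))
    (T : ℝ) (hT : 1 ≤ T) (F : Finset ℕ) :
    ∑ j ∈ F.filter (fun j => ‖s j‖ ≤ T), m j * (1/‖s j‖) ≤ C * 2^(n+2) * T^n := by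
  set K : ℕ := ⌊Real.logb 2 T⌋₊ with hK
  set F₁ := F.filter (fun j => ‖s j‖ ≤ T) with hF₁
  have h2K : (2:ℝ)^K ≤ T := by
    calc (2:ℝ)^K = (2:ℝ)^((K:ℝ)) := by rw [Real.rpow_natCast]
      _ ≤ (2:ℝ)^(Real.logb 2 T) :=
          Real.rpow_le_rpow_of_exponent_le one_le_two
            (Nat.floor_le (Real.logb_nonneg one_lt_two hT))
      _ = T := Real.rpow_logb two_pos (by norm_num) (by linarith)
  have hidxK : ∀ j ∈ F₁, idx s j ≤ K := by
    intro j hj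
    obtain ⟨_, hjT⟩ := Finset.mem_filter.1 hj
    apply Nat.floor_le_floor
    have h0 : (0:ℝ) < ‖s j‖ := lt_of_lt_of_le one_pos (hs1 j)
    exact (Real.logb_le_logb (b := 2) one_lt_two h0 (by linarith)).2 hjT
  have hmaster := dyadic_master s m n C hs1 hm hcount F₁ (fun j => 1/‖s j‖)
    (fun k => (1/2:ℝ)^k) (fun k => by positivity)
    (fun j hj => by
      have h1 := idx_le s hs1 j
      have h2 : (0:ℝ) < (2:ℝ)^(idx s j) := by positivity
      show (1:ℝ)/‖s j‖ ≤ ((1:ℝ)/2)^(idx s j)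
      rw [one_div_pow]
      exact one_div_le_one_div_of_le h2 h1)
    (K+1) (fun j hj => Nat.lt_succ_of_le (hidxK j hj))
  refine hmaster.trans ?_
  have hterm : ∀ k : ℕ, (C * ((2:ℝ)^(k+1))^(n+1)) * (1/2:ℝ)^k
      = (C * 2^(n+1)) * ((2:ℝ)^n)^k := by
    intro k
    have h1 : ((2:ℝ)^(k+1))^(n+1) = (2:ℝ)^((k+1)*(n+1)) := by rw [← pow_mul]
    have h2 : (2:ℝ)^((k+1)*(n+1)) = 2^(n+1) * ((2:ℝ)^n)^k * 2^k := by
      rw [← pow_mul, ← pow_add, ← pow_add]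
      congr 1
      ring
    rw [h1, h2, one_div_pow]
    field_simp
  simp_rw [hterm]
  rw [← Finset.mul_sum]
  have hr2n : (2:ℝ) ≤ 2^n := by
    calc (2:ℝ) = 2^1 := (pow_one 2).symm
      _ ≤ 2^n := pow_le_pow_right₀ one_le_two hn
  have hgeom := geomsum_le2 ((2:ℝ)^n) hr2n K
  calc (C * 2^(n+1)) * ∑ k ∈ Finset.range (K+1), ((2:ℝ)^n)^k
      ≤ (C * 2^(n+1)) * (2 * ((2:ℝ)^n)^K) :=
        mul_le_mul_of_nonneg_left hgeom (by positivity)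
    _ = C * 2^(n+2) * ((2:ℝ)^K)^n := by
        rw [← pow_mul, ← pow_mul, mul_comm n K]
        ring
    _ ≤ C * 2^(n+2) * T^n := by
        apply mul_le_mul_of_nonneg_left (pow_le_pow_left₀ (by positivity) h2K n) (by positivity)
end bounds

section tail
variable {C : ℝ} {s : ℕ → ℂ} {m : ℕ → ℝ}

lemma tail_bound (n : ℕ) (hn : 1 ≤ n) (hC : 0 < C) (hs1 : ∀ j, 1 ≤ ‖s j‖)
    (hm : ∀ j, 0 ≤ m j)
    (hcount : ∀ R : ℝ, 1 ≤ R → ∀ F : Finset ℕ, (∀ j ∈ F, ‖s j‖ ≤ R) →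
      ∑ j ∈ F, m j ≤ C * R ^ (n + 1))
    (T : ℝ) (hT : 1 ≤ T) (F : Finset ℕ) :
    ∑ j ∈ F.filter (fun j => ¬ ‖s j‖ ≤ T), m j * (1/‖s j‖^(n+2)) ≤ C * 2^(n+3) / T := by
  set K₀ : ℕ := ⌊Real.logb 2 T⌋₊ with hK₀
  set F₂ := F.filter (fun j => ¬ ‖s j‖ ≤ T) with hF₂
  have hT0 : (0:ℝ) < T := by linarith
  have hTlt : T < 2^(K₀+1) := by
    calc T = (2:ℝ)^(Real.logb 2 T) := (Real.rpow_logb two_pos (by norm_num) hT0).symm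
      _ < (2:ℝ)^(((K₀:ℝ)+1)) := Real.rpow_lt_rpow_of_exponent_lt one_lt_two (Nat.lt_floor_add_one _)
      _ = (2:ℝ)^(K₀+1) := by
          rw [← Real.rpow_natCast 2 (K₀+1)]
          norm_num
  have hidxK : ∀ j ∈ F₂, K₀ ≤ idx s j := by
    intro j hj
    obtain ⟨_, hjT⟩ := Finset.mem_filter.1 hj
    apply Nat.floor_le_floor
    have h0 : (0:ℝ) < ‖s j‖ := lt_of_lt_of_le one_pos (hs1 j)
    exact (Real.logb_le_logb (b := 2) one_lt_two hT0 h0).2 (le_of_not_ge hjT)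
  set u : ℕ → ℝ := fun k => if K₀ ≤ k then (((1:ℝ)/2)^(n+2))^k else 0 with hu_def
  have hu : ∀ k, 0 ≤ u k := by
    intro k
    simp only [hu_def]
    split <;> positivity
  set M : ℕ := (F₂.sup (idx s)) + 1 with hM
  have hMlt : ∀ j ∈ F₂, idx s j < M := fun j hj => Nat.lt_succ_of_le (Finset.le_sup hj)
  have hgu : ∀ j ∈ F₂, (fun j => 1/‖s j‖^(n+2)) j ≤ u (idx s j) := by
    intro j hj
    show (1:ℝ)/‖s j‖^(n+2) ≤ u (idx s j)
    rw [hu_def]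
    simp only [if_pos (hidxK j hj)]
    have h1 := idx_le s hs1 j
    have h2 : (0:ℝ) < ((2:ℝ)^(idx s j))^(n+2) := by positivity
    have hp : ((2:ℝ)^(idx s j))^(n+2) ≤ ‖s j‖^(n+2) := pow_le_pow_left₀ (by positivity) h1 _
    have heq : (((1:ℝ)/2)^(n+2))^(idx s j) = 1/((2:ℝ)^(idx s j))^(n+2) := by
      rw [← pow_mul, Nat.mul_comm (n+2) (idx s j), pow_mul, one_div_pow, one_div_pow]
    rw [heq]
    exact one_div_le_one_div_of_le h2 hp
  have hmaster := dyadic_master s m n C hs1 hm hcount F₂ (fun j => 1/‖s j‖^(n+2)) u hu hgu M hMlt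
  refine hmaster.trans ?_
  have hterm : ∀ k : ℕ, (C * ((2:ℝ)^(k+1))^(n+1)) * u k
      ≤ (C * 2^(n+1)) * (if K₀ ≤ k then ((1:ℝ)/2)^k else 0) := by
    intro k
    rw [hu_def]
    by_cases hk : K₀ ≤ k
    · simp only [if_pos hk]
      apply le_of_eq
      have h1 : ((2:ℝ)^(k+1))^(n+1) = (2:ℝ)^((k+1)*(n+1)) := by rw [← pow_mul]
      have h2 : (((1:ℝ)/2)^(n+2))^k = 1/(2:ℝ)^((n+2)*k) := by
        rw [one_div_pow, one_div_pow, ← pow_mul]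
      rw [h1, h2, one_div_pow]
      have key : (2:ℝ)^((k+1)*(n+1)) * ((1:ℝ)/2^((n+2)*k)) = 2^(n+1) * ((1:ℝ)/2^k) := by
        rw [mul_one_div, mul_one_div, div_eq_div_iff (by positivity) (by positivity),
          ← pow_add, ← pow_add]
        congr 1
        ring
      linear_combination C * key
    · simp [if_neg hk]
  have hsum2 : ∑ k ∈ Finset.range M, (if K₀ ≤ k then ((1:ℝ)/2)^k else 0)
      ≤ 2 * ((1:ℝ)/2)^K₀ := by
    rw [← Finset.sum_filter]
    have hflt : (Finset.range M).filter (fun k => K₀ ≤ k) = Finset.Ico K₀ M := by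
      ext k
      simp [Finset.mem_Ico, Finset.mem_filter, Finset.mem_range, and_comm]
    rw [hflt]
    rcases le_or_gt K₀ M with h | h
    · rw [geom_sum_Ico (by norm_num : ((1:ℝ)/2) ≠ 1) h]
      have hM0 : (0:ℝ) ≤ ((1:ℝ)/2)^M := by positivity
      rw [div_le_iff_of_neg (by norm_num : ((1:ℝ)/2 - 1) < 0)]
      linarith
    · rw [Finset.Ico_eq_empty (by omega), Finset.sum_empty]
      positivity
  have hfin : 2 * ((1:ℝ)/2)^K₀ ≤ 4 / T := by
    have h2K : (0:ℝ) < 2^K₀ := by positivity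
    have hps : (2:ℝ)^(K₀+1) = 2^K₀ * 2 := pow_succ 2 K₀
    rw [one_div_pow, mul_one_div, div_le_div_iff₀ h2K hT0]
    nlinarith
  calc ∑ k ∈ Finset.range M, (C * ((2:ℝ)^(k+1))^(n+1)) * u k
      ≤ ∑ k ∈ Finset.range M, (C * 2^(n+1)) * (if K₀ ≤ k then ((1:ℝ)/2)^k else 0) :=
        Finset.sum_le_sum (fun k _ => hterm k)
    _ = (C * 2^(n+1)) * ∑ k ∈ Finset.range M, (if K₀ ≤ k then ((1:ℝ)/2)^k else 0) := by
        rw [Finset.mul_sum]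
    _ ≤ (C * 2^(n+1)) * (2 * ((1:ℝ)/2)^K₀) := mul_le_mul_of_nonneg_left hsum2 (by positivity)
    _ ≤ (C * 2^(n+1)) * (4 / T) := mul_le_mul_of_nonneg_left hfin (by positivity)
    _ = C * 2^(n+3) / T := by
        rw [pow_add]
        ring
end tail

lemma psi_bound (n : ℕ) (hn : 1 ≤ n) (a : ℝ) (ha : 0 < a) (x y : ℝ)
    (hx : Real.exp a < x) (hy : 0 < y) (hyx : y ≤ x)
    (s : ℂ) (hs : s.re ≤ (n:ℝ)/2)
    (φ : ℝ → ℝ) (hφ : ContDiff ℝ (⊤ : ℕ∞) φ)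
    (hsupp : ∀ t, t ∉ Icc (a/2) (Real.log (x+y)) → φ t = 0)
    (k : ℕ) (D₁ D₂ : ℝ) (hD1 : 0 ≤ D₁) (hD2 : 0 ≤ D₂)
    (hb1 : ∀ t, t ≤ Real.log x → |iteratedDeriv k φ t| ≤ D₁)
    (hb2 : ∀ t, |iteratedDeriv k φ t| ≤ D₂) :
    ‖s‖^k * ‖∫ t in Ioi (0:ℝ), Complex.exp (s*t) * ((φ t : ℝ) : ℂ)‖
      ≤ (2*D₁ + D₂ * 2^((n:ℝ)/2) * (y/x)) * x^((n:ℝ)/2) := by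
  have hx0 : (0:ℝ) < x := lt_trans (Real.exp_pos a) hx
  set L := Real.log x with hLdef
  set B := Real.log (x+y) with hBdef
  set B' := B + 1 with hB'def
  have haL : a < L := (Real.lt_log_iff_exp_lt hx0).2 hx
  have hL0 : 0 < L := lt_trans ha haL
  have hLB : L ≤ B := Real.log_le_log hx0 (by linarith)
  have hB'0 : (0:ℝ) ≤ B' := by linarith
  -- vanishing of iterated derivatives
  have hvan0 : ∀ j, iteratedDeriv j φ 0 = 0 := by
    intro j
    apply iterDeriv_zero_of_nhds _ j
    filter_upwards [Iio_mem_nhds (by linarith : (0:ℝ) < a/2)] with t ht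
    exact hsupp t (fun hc => absurd hc.1 (not_le.2 ht))
  have hvanB : ∀ t, B < t → ∀ j, iteratedDeriv j φ t = 0 := by
    intro t ht j
    apply iterDeriv_zero_of_nhds _ j
    filter_upwards [Ioi_mem_nhds ht] with u hu
    exact hsupp u (fun hc => absurd hc.2 (not_le.2 hu))
  have hvanB' : ∀ j, iteratedDeriv j φ B' = 0 := hvanB B' (by linarith)
  -- the integrand
  set f : ℝ → ℂ := fun t => Complex.exp (s*t) * ((φ t : ℝ) : ℂ) with hfdef
  have hfc : Continuous f :=
    (Complex.continuous_exp.comp (continuous_const.mul Complex.continuous_ofReal)).mul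
      (Complex.continuous_ofReal.comp hφ.continuous)
  have hfint : Integrable f := by
    apply hfc.integrable_of_hasCompactSupport
    apply HasCompactSupport.intro (isCompact_Icc (a := a/2) (b := B))
    intro t ht
    simp [hfdef, hsupp t ht]
  -- reduce Ioi integral to interval integral
  have hIoi : ∫ t in Ioi (0:ℝ), f t = ∫ t in (0:ℝ)..B', f t := by
    have hsplit : Ioc (0:ℝ) B' ∪ Ioi B' = Ioi (0:ℝ) := Ioc_union_Ioi_eq_Ioi hB'0
    have htail : ∫ t in Ioi B', f t = 0 := by
      rw [setIntegral_congr_fun measurableSet_Ioi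
        (fun t (ht : t ∈ Ioi B') => by
          show f t = (fun _ => (0:ℂ)) t
          simp [hfdef, hsupp t (fun hc => absurd hc.2 (not_le.2 (by simp at ht; linarith)))])]
      simp
    rw [← hsplit, setIntegral_union (Ioc_disjoint_Ioi le_rfl) measurableSet_Ioi
      hfint.integrableOn hfint.integrableOn, htail, add_zero,
      intervalIntegral.integral_of_le hB'0]
  -- integration by parts
  have hparts := parts_iter s hφ 0 B' hvan0 hvanB' k
  have hkey : ‖s‖^k * ‖∫ t in (0:ℝ)..B', f t‖
      = ‖∫ t in (0:ℝ)..B', Complex.exp (s*t) * ((iteratedDeriv k φ t : ℝ) : ℂ)‖ := by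
    rw [hparts, norm_mul, norm_pow, norm_neg]
  -- norm bound by real integral
  have hcont_iter : Continuous (iteratedDeriv k φ) := hφ.continuous_iteratedDeriv k (by exact WithTop.coe_le_coe.2 le_top)
  have hnormle := norm_int_le s n hs (iteratedDeriv k φ) hcont_iter 0 B' le_rfl hB'0
  -- split the real integral
  set c : ℝ := (n:ℝ)/2 with hcdef
  have hc0 : c ≠ 0 := by positivity
  have hcpos : (0:ℝ) < c := by positivity
  have hintexp : ∀ u v : ℝ, IntervalIntegrable (fun t => Real.exp (c*t) * |iteratedDeriv k φ t|) volume u v :=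
    fun u v => ((Real.continuous_exp.comp (continuous_const.mul continuous_id)).mul
      hcont_iter.abs).intervalIntegrable _ _
  have hsplit2 : (∫ t in (0:ℝ)..B', Real.exp (c*t) * |iteratedDeriv k φ t|)
      = (∫ t in (0:ℝ)..L, Real.exp (c*t) * |iteratedDeriv k φ t|)
        + (∫ t in L..B, Real.exp (c*t) * |iteratedDeriv k φ t|)
        + (∫ t in B..B', Real.exp (c*t) * |iteratedDeriv k φ t|) := by
    rw [← intervalIntegral.integral_add_adjacent_intervals (hintexp 0 L) (hintexp L B'),
      ← intervalIntegral.integral_add_adjacent_intervals (hintexp L B) (hintexp B B')]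
    ring
  have hthird : (∫ t in B..B', Real.exp (c*t) * |iteratedDeriv k φ t|) = 0 := by
    rw [intervalIntegral.integral_of_le (by linarith : B ≤ B'),
      setIntegral_congr_fun measurableSet_Ioc
        (fun t (ht : t ∈ Ioc B B') => by
          show _ = (fun _ => (0:ℝ)) t
          simp [hvanB t ht.1 k])]
    simp
  -- first piece
  have hest1 : (∫ t in (0:ℝ)..L, Real.exp (c*t) * |iteratedDeriv k φ t|) ≤ 2 * D₁ * x^c := by
    have hmono : (∫ t in (0:ℝ)..L, Real.exp (c*t) * |iteratedDeriv k φ t|)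
        ≤ ∫ t in (0:ℝ)..L, D₁ * Real.exp (c*t) := by
      apply intervalIntegral.integral_mono_on hL0.le (hintexp 0 L)
        ((continuous_const.mul (Real.continuous_exp.comp
          (continuous_const.mul continuous_id))).intervalIntegrable _ _)
      intro t ht
      show Real.exp (c*t) * |iteratedDeriv k φ t| ≤ D₁ * Real.exp (c*t)
      rw [mul_comm D₁ _]
      exact mul_le_mul_of_nonneg_left (hb1 t ht.2) (Real.exp_pos _).le
    have hval : (∫ t in (0:ℝ)..L, D₁ * Real.exp (c*t)) = D₁ * ((Real.exp (c*L) - 1)/c) := by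
      rw [intervalIntegral.integral_const_mul, integral_exp_mul' hc0]
      simp
    have hxc : Real.exp (c*L) = x^c := by
      rw [Real.rpow_def_of_pos hx0, mul_comm]
    have hxc0 : (0:ℝ) ≤ x^c := Real.rpow_nonneg hx0.le _
    have hn1 : (1:ℝ) ≤ (n:ℝ) := by exact_mod_cast hn
    refine hmono.trans ?_
    rw [hval, hxc]
    have h1 : (x^c - 1)/c ≤ 2 * x^c := by
      rw [div_le_iff₀ hcpos]
      nlinarith
    calc D₁ * ((x^c - 1)/c) ≤ D₁ * (2 * x^c) := mul_le_mul_of_nonneg_left h1 hD1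
      _ = 2 * D₁ * x^c := by ring
  have hest2 : (∫ t in L..B, Real.exp (c*t) * |iteratedDeriv k φ t|) ≤ D₂ * 2^c * (y/x) * x^c := by
    have hmono : (∫ t in L..B, Real.exp (c*t) * |iteratedDeriv k φ t|)
        ≤ ∫ t in L..B, Real.exp (c*B) * D₂ := by
      apply intervalIntegral.integral_mono_on hLB (hintexp L B) intervalIntegrable_const
      intro t ht
      exact mul_le_mul (Real.exp_le_exp.2 (mul_le_mul_of_nonneg_left ht.2 hcpos.le)) (hb2 t)
        (abs_nonneg _) (Real.exp_pos _).le
    have hconst : (∫ t in L..B, Real.exp (c*B) * D₂) = (B - L) * (Real.exp (c*B) * D₂) := by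
      rw [intervalIntegral.integral_const]
      simp [smul_eq_mul]
    have hBL : B - L ≤ y/x := by
      have heq : B - L = Real.log ((x+y)/x) := by
        rw [Real.log_div (by positivity) (ne_of_gt hx0)]
      rw [heq]
      have hlog := Real.log_le_sub_one_of_pos (show (0:ℝ) < (x+y)/x by positivity)
      have hxx : (x+y)/x - 1 = y/x := by field_simp; ring
      linarith
    have hexpB : Real.exp (c*B) ≤ 2^c * x^c := by
      have h1 : Real.exp (c*B) = (x+y)^c := by
        rw [Real.rpow_def_of_pos (by positivity), mul_comm]
      rw [h1, ← Real.mul_rpow (by norm_num) hx0.le]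
      exact Real.rpow_le_rpow (by positivity) (by linarith) hcpos.le
    refine hmono.trans ?_
    rw [hconst]
    calc (B - L) * (Real.exp (c*B) * D₂) ≤ (y/x) * ((2^c * x^c) * D₂) := by
          apply mul_le_mul hBL (mul_le_mul_of_nonneg_right hexpB hD2)
            (mul_nonneg (Real.exp_pos _).le hD2) (by positivity)
      _ = D₂ * 2^c * (y/x) * x^c := by ring
  rw [hIoi, hkey]
  refine hnormle.trans ?_
  rw [hsplit2, hthird, add_zero]
  calc (∫ t in (0:ℝ)..L, Real.exp (c*t) * |iteratedDeriv k φ t|)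
        + (∫ t in L..B, Real.exp (c*t) * |iteratedDeriv k φ t|)
      ≤ 2*D₁*x^c + D₂*2^c*(y/x)*x^c := add_le_add hest1 hest2
    _ = (2*D₁ + D₂*2^c*(y/x))*x^c := by ring

/-- Estimate for the spectral sum over the resonances with `Re s ≤ n/2` in the trace
formula: under the Patterson–Perry counting bound `Σ_{|s_j| ≤ R} m_j ≤ C R^{n+1}`, and
for test functions `φ` supported in `[a/2, log(x+y)]` with the derivative bounds
`|φ'| ≤ C₁` (resp. `C₁ x/y`) and `|φ^{(n+2)}| ≤ C₂` (resp. `C₂ (x/y)^{n+2}`) on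
`(-∞, log x]` (resp. on `ℝ`), one has
`Σ_j m_j |∫_0^∞ e^{s_j t} φ(t) dt| ≤ C' x^{n/2} (x/y)^n`
with `C'` depending only on `n`, `a`, `C`, `C₁`, `C₂`. -/
theorem spectral_sum_estimate (n : ℕ) (hn : 1 ≤ n) (a C C₁ C₂ : ℝ)
    (ha : 0 < a) (hC : 0 < C) (hC₁ : 0 < C₁) (hC₂ : 0 < C₂) :
    ∃ C' > 0, ∀ x y : ℝ, Real.exp a < x → 0 < y → y ≤ x →
      ∀ s : ℕ → ℂ, (∀ j, 1 ≤ ‖s j‖ ∧ (s j).re ≤ (n : ℝ) / 2) →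
      ∀ m : ℕ → ℝ, (∀ j, 0 ≤ m j) →
      (∀ R : ℝ, 1 ≤ R → ∀ F : Finset ℕ, (∀ j ∈ F, ‖s j‖ ≤ R) →
        ∑ j ∈ F, m j ≤ C * R ^ (n + 1)) →
      ∀ φ : ℝ → ℝ, ContDiff ℝ (⊤ : ℕ∞) φ →
        (∀ t, 0 ≤ φ t ∧ φ t ≤ 1) →
        (∀ t, t ∉ Icc (a / 2) (Real.log (x + y)) → φ t = 0) →
        (∀ t, t ≤ Real.log x → |deriv φ t| ≤ C₁) →
        (∀ t, |deriv φ t| ≤ C₁ * (x / y)) →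
        (∀ t, t ≤ Real.log x → |iteratedDeriv (n + 2) φ t| ≤ C₂) →
        (∀ t, |iteratedDeriv (n + 2) φ t| ≤ C₂ * (x / y) ^ (n + 2)) →
        Summable (fun j : ℕ =>
          m j * ‖∫ t in Ioi (0 : ℝ), Complex.exp (s j * t) * (φ t : ℂ)‖) ∧
        ∑' j : ℕ, m j * ‖∫ t in Ioi (0 : ℝ), Complex.exp (s j * t) * (φ t : ℂ)‖
          ≤ C' * x ^ ((n : ℝ) / 2) * (x / y) ^ n := by
  refine ⟨(2*C₁ + C₁*2^((n:ℝ)/2)) * (C*2^(n+2)) + (2*C₂ + C₂*2^((n:ℝ)/2)) * (C*2^(n+3)),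
    by positivity, ?_⟩
  intro x y hx hy hyx s hs m hm hcount φ hφ hφ01 hsupp hd1 hd2 hdn1 hdn2
  have hx0 : (0:ℝ) < x := lt_trans (Real.exp_pos a) hx
  set c : ℝ := (n:ℝ)/2 with hc_def
  set T : ℝ := x/y with hT_def
  have hT : (1:ℝ) ≤ T := (one_le_div hy).2 hyx
  have hT0 : (0:ℝ) < T := by linarith
  set K₁ : ℝ := 2*C₁ + C₁*2^c with hK₁_def
  set K₂ : ℝ := 2*C₂ + C₂*2^c with hK₂_def
  have h2c : (0:ℝ) ≤ (2:ℝ)^c := Real.rpow_nonneg (by norm_num) c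
  have hK₁0 : (0:ℝ) ≤ K₁ := by rw [hK₁_def]; positivity
  have hK₂0 : (0:ℝ) ≤ K₂ := by rw [hK₂_def]; positivity
  have hxc0 : (0:ℝ) ≤ x^c := Real.rpow_nonneg hx0.le c
  set ψ : ℕ → ℝ := fun j => ‖∫ t in Ioi (0:ℝ), Complex.exp (s j * t) * ((φ t : ℝ) : ℂ)‖
    with hψ_def
  have hs1 : ∀ j, 1 ≤ ‖s j‖ := fun j => (hs j).1
  have hsj0 : ∀ j, (0:ℝ) < ‖s j‖ := fun j => lt_of_lt_of_le one_pos (hs1 j)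
  -- bound with one integration by parts
  have hb1j : ∀ j, ψ j ≤ (K₁ * x^c) * (1/‖s j‖) := by
    intro j
    have hψ1 := psi_bound n hn a ha x y hx hy hyx (s j) (hs j).2 φ hφ hsupp 1 C₁ (C₁*(x/y))
      hC₁.le (by positivity)
      (by intro t ht; rw [iteratedDeriv_one]; exact hd1 t ht)
      (by intro t; rw [iteratedDeriv_one]; exact hd2 t)
    rw [pow_one] at hψ1
    have hrhs : (2*C₁ + (C₁*(x/y)) * 2^c * (y/x)) * x^c = K₁ * x^c := by
      rw [hK₁_def]
      have hxy1 : (x/y)*(y/x) = 1 := by field_simp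
      linear_combination (C₁*(2:ℝ)^c*x^c) * hxy1
    rw [hrhs] at hψ1
    rw [mul_one_div, le_div_iff₀ (hsj0 j)]
    calc ψ j * ‖s j‖ = ‖s j‖ * ψ j := by ring
      _ ≤ K₁ * x^c := hψ1
  -- bound with n+2 integrations by parts
  have hb2j : ∀ j, ψ j ≤ (K₂ * T^(n+1) * x^c) * (1/‖s j‖^(n+2)) := by
    intro j
    have hψ2 := psi_bound n hn a ha x y hx hy hyx (s j) (hs j).2 φ hφ hsupp (n+2) C₂
      (C₂*(x/y)^(n+2)) hC₂.le (by positivity) hdn1 hdn2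
    have hrhs : (2*C₂ + (C₂*(x/y)^(n+2)) * 2^c * (y/x)) * x^c ≤ (K₂ * T^(n+1)) * x^c := by
      apply mul_le_mul_of_nonneg_right _ hxc0
      have hxy1 : (x/y)*(y/x) = 1 := by field_simp
      have hps : (x/y)^(n+2) = (x/y)^(n+1) * (x/y) := pow_succ _ _
      have heq : (C₂*(x/y)^(n+2)) * 2^c * (y/x) = C₂*2^c*(x/y)^(n+1) := by
        rw [hps]
        linear_combination (C₂*(2:ℝ)^c*(x/y)^(n+1)) * hxy1
      rw [heq, hK₂_def, hT_def]
      have hone : (1:ℝ) ≤ (x/y)^(n+1) := one_le_pow₀ hT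
      nlinarith [hC₂.le, mul_nonneg hC₂.le h2c]
    have h2 := hψ2.trans hrhs
    have hpow0 : (0:ℝ) < ‖s j‖^(n+2) := pow_pos (hsj0 j) _
    rw [mul_one_div, le_div_iff₀ hpow0]
    calc ψ j * ‖s j‖^(n+2) = ‖s j‖^(n+2) * ψ j := by ring
      _ ≤ (K₂ * T^(n+1)) * x^c := h2
      _ = K₂ * T^(n+1) * x^c := by ring
  -- the finite-sum bound
  have hmain : ∀ N : ℕ, ∑ j ∈ Finset.range N, m j * ψ j
      ≤ (K₁ * (C*2^(n+2)) + K₂ * (C*2^(n+3))) * x^c * T^n := by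
    intro N
    rw [← Finset.sum_filter_add_sum_filter_not (Finset.range N) (fun j => ‖s j‖ ≤ T)
      (fun j => m j * ψ j)]
    have hH : ∑ j ∈ (Finset.range N).filter (fun j => ‖s j‖ ≤ T), m j * ψ j
        ≤ (K₁ * x^c) * (C * 2^(n+2) * T^n) := by
      calc ∑ j ∈ (Finset.range N).filter (fun j => ‖s j‖ ≤ T), m j * ψ j
          ≤ ∑ j ∈ (Finset.range N).filter (fun j => ‖s j‖ ≤ T),
              (K₁ * x^c) * (m j * (1/‖s j‖)) := by
            apply Finset.sum_le_sum
            intro j _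
            calc m j * ψ j ≤ m j * ((K₁ * x^c) * (1/‖s j‖)) :=
                  mul_le_mul_of_nonneg_left (hb1j j) (hm j)
              _ = (K₁ * x^c) * (m j * (1/‖s j‖)) := by ring
        _ = (K₁ * x^c) * ∑ j ∈ (Finset.range N).filter (fun j => ‖s j‖ ≤ T),
              m j * (1/‖s j‖) := by rw [Finset.mul_sum]
        _ ≤ (K₁ * x^c) * (C * 2^(n+2) * T^n) := by
            apply mul_le_mul_of_nonneg_left
              (head_bound n hn hC hs1 hm hcount T hT (Finset.range N))
              (mul_nonneg hK₁0 hxc0)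
    have hTl : ∑ j ∈ (Finset.range N).filter (fun j => ¬ ‖s j‖ ≤ T), m j * ψ j
        ≤ (K₂ * T^(n+1) * x^c) * (C * 2^(n+3) / T) := by
      calc ∑ j ∈ (Finset.range N).filter (fun j => ¬ ‖s j‖ ≤ T), m j * ψ j
          ≤ ∑ j ∈ (Finset.range N).filter (fun j => ¬ ‖s j‖ ≤ T),
              (K₂ * T^(n+1) * x^c) * (m j * (1/‖s j‖^(n+2))) := by
            apply Finset.sum_le_sum
            intro j _
            calc m j * ψ j ≤ m j * ((K₂ * T^(n+1) * x^c) * (1/‖s j‖^(n+2))) :=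
                  mul_le_mul_of_nonneg_left (hb2j j) (hm j)
              _ = (K₂ * T^(n+1) * x^c) * (m j * (1/‖s j‖^(n+2))) := by ring
        _ = (K₂ * T^(n+1) * x^c) * ∑ j ∈ (Finset.range N).filter (fun j => ¬ ‖s j‖ ≤ T),
              m j * (1/‖s j‖^(n+2)) := by rw [Finset.mul_sum]
        _ ≤ (K₂ * T^(n+1) * x^c) * (C * 2^(n+3) / T) := by
            apply mul_le_mul_of_nonneg_left
              (tail_bound n hn hC hs1 hm hcount T hT (Finset.range N))
              (by positivity)
    have harith : (K₁ * x^c) * (C * 2^(n+2) * T^n) + (K₂ * T^(n+1) * x^c) * (C * 2^(n+3) / T)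
        = (K₁ * (C*2^(n+2)) + K₂ * (C*2^(n+3))) * x^c * T^n := by
      rw [pow_succ T n]
      field_simp
    calc _ ≤ (K₁ * x^c) * (C * 2^(n+2) * T^n) + (K₂ * T^(n+1) * x^c) * (C * 2^(n+3) / T) :=
          add_le_add hH hTl
      _ = _ := harith
  have hnn : ∀ j, 0 ≤ m j * ψ j := fun j => mul_nonneg (hm j) (norm_nonneg _)
  have hsummable : Summable (fun j => m j * ψ j) := summable_of_sum_range_le hnn hmain
  exact ⟨hsummable, hsummable.tsum_le_of_sum_range_le hmain⟩
end
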